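/- arXiv:1710.02034 — 4 statements merged into one kernel-verified Lean document; each statement's English description precedes it below -/
import Mathlib

section
/- Let f : V_m → GF(2) be any Boolean function and define g : V_{m+1} → GF(2) by g(0,y) = f(y) and g(1,y) = 1 + f(ȳ) for y ∈ V_m (addition mod 2), where (b,y) denotes prepending the bit b to y. Then N(g) = 2·N(f). (This is the identity N(A C(A)*) = 2N(A) for truth tables A.) -/
open Finset

/-- Hamming weight of a vector in `V_N = (Fin N → ZMod 2)`. -/
def wtV {N : ℕ} (x : Fin N → ZMod 2) : ℕ :=
  (Finset.univ.filter (fun i => x i = 1)).card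

/-- Hamming weight of a Boolean function `f : V_N → GF(2)`. -/
def wtF {N : ℕ} (f : (Fin N → ZMod 2) → ZMod 2) : ℕ :=
  (Finset.univ.filter (fun x => f x = 1)).card

/-- `a` is affine: `a x = w · x + b` for some `w ∈ V_N`, `b ∈ GF(2)`. -/
def IsAffine {N : ℕ} (a : (Fin N → ZMod 2) → ZMod 2) : Prop :=
  ∃ w : Fin N → ZMod 2, ∃ b : ZMod 2, ∀ x, a x = (∑ i, w i * x i) + b

/-- Hamming distance `d(f,g) = wt(f + g)`. -/
def hdist {N : ℕ} (f g : (Fin N → ZMod 2) → ZMod 2) : ℕ :=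
  wtF (fun x => f x + g x)

/-- Nonlinearity: minimum distance to affine functions. -/
noncomputable def nlin {N : ℕ} (f : (Fin N → ZMod 2) → ZMod 2) : ℕ :=
  sInf {d : ℕ | ∃ a, IsAffine a ∧ d = hdist f a}

/-- Threshold (majority-type) function: `maj N t x = 1` iff `wt(x) ≥ t`.
So `M_{2n+1} = maj (2n+1) (n+1)` and `M_{2n} = maj (2n) n`. -/
def maj (N t : ℕ) (x : Fin N → ZMod 2) : ZMod 2 :=
  if t ≤ wtV x then 1 else 0


lemma wtF_compl_add {m : ℕ} (F : (Fin m → ZMod 2) → ZMod 2) :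
    wtF F + wtF (fun x => F x + 1) = 2 ^ m := by
  unfold wtF
  have h : (univ.filter (fun x : Fin m → ZMod 2 => F x + 1 = 1))
      = univ.filter (fun x => ¬ (F x = 1)) := by
    apply Finset.filter_congr
    intro x _
    have : ∀ u : ZMod 2, (u + 1 = 1 ↔ ¬ u = 1) := by decide
    simp [this (F x)]
  rw [h, Finset.card_filter_add_card_filter_not, Finset.card_univ]
  simp [ZMod.card]

lemma wtF_piece {m : ℕ} (h : (Fin (m+1) → ZMod 2) → ZMod 2) (c : ZMod 2) :
    (univ.filter (fun x : Fin (m+1) → ZMod 2 => h x = 1 ∧ x 0 = c)).card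
      = wtF (fun y => h (Fin.cons c y)) := by
  rw [wtF]
  apply Finset.card_bij (fun x _ => Fin.tail x)
  · intro x hx
    simp only [mem_filter, mem_univ, true_and] at hx ⊢
    have hx2 : Fin.cons c (Fin.tail x) = x := by
      rw [← hx.2]; exact Fin.cons_self_tail x
    rw [hx2]; exact hx.1
  · intro x hx x' hx' he
    simp only [mem_filter, mem_univ, true_and] at hx hx'
    have h1 : Fin.cons c (Fin.tail x) = x := by
      rw [← hx.2]; exact Fin.cons_self_tail x
    have h2 : Fin.cons c (Fin.tail x') = x' := by
      rw [← hx'.2]; exact Fin.cons_self_tail x'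
    rw [← h1, ← h2, he]
  · intro y hy
    simp only [mem_filter, mem_univ, true_and] at hy
    refine ⟨Fin.cons c y, by simp [hy], ?_⟩
    exact rfl

lemma wtF_split {m : ℕ} (h : (Fin (m+1) → ZMod 2) → ZMod 2) :
    wtF h = wtF (fun y => h (Fin.cons 0 y)) + wtF (fun y => h (Fin.cons 1 y)) := by
  rw [← wtF_piece h 0, ← wtF_piece h 1, wtF]
  have key := Finset.card_filter_add_card_filter_not
    (s := univ.filter (fun x : Fin (m+1) → ZMod 2 => h x = 1)) (p := fun x => x 0 = 0)
  rw [Finset.filter_filter, Finset.filter_filter] at key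
  have heq : (filter (fun a : Fin (m+1) → ZMod 2 => h a = 1 ∧ ¬ a 0 = 0) univ)
       = filter (fun x => h x = 1 ∧ x 0 = 1) univ := by
    apply Finset.filter_congr; intro x _
    have hu : ∀ u : ZMod 2, (¬ u = 0 ↔ u = 1) := by decide
    simp only [hu (x 0)]
  rw [heq] at key
  rw [← key]

lemma wtF_compl_arg {m : ℕ} (F : (Fin m → ZMod 2) → ZMod 2) :
    wtF (fun y => F (fun i => 1 + y i)) = wtF F := by
  unfold wtF
  apply Finset.card_bij (fun y _ => fun i => (1 : ZMod 2) + y i)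
  · intro y hy
    simp only [mem_filter, mem_univ, true_and] at hy ⊢
    exact hy
  · intro y hy y' hy' he
    funext i
    have := congrFun he i
    exact add_left_cancel this
  · intro z hz
    simp only [mem_filter, mem_univ, true_and] at hz
    refine ⟨fun i => 1 + z i, ?_, ?_⟩
    · simp only [mem_filter, mem_univ, true_and]
      have : (fun i => (1:ZMod 2) + (1 + z i)) = z := by
        funext i
        have : ∀ u : ZMod 2, 1 + (1 + u) = u := by decide
        exact this (z i)
      rw [this]; exact hz
    · funext i
      show (1 : ZMod 2) + (1 + z i) = z i
      have : ∀ u : ZMod 2, 1 + (1 + u) = u := by decide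
      exact this (z i)

-- distance decomposition
lemma hdist_decomp {m : ℕ} (f : (Fin m → ZMod 2) → ZMod 2)
    (g : (Fin (m + 1) → ZMod 2) → ZMod 2)
    (h0 : ∀ y, g (Fin.cons (0 : ZMod 2) y) = f y)
    (h1 : ∀ y, g (Fin.cons (1 : ZMod 2) y) = 1 + f (fun i => 1 + y i))
    (w : Fin (m+1) → ZMod 2) (b : ZMod 2) :
    hdist g (fun x => (∑ i, w i * x i) + b)
      = hdist f (fun y => (∑ i, Fin.tail w i * y i) + b)
        + hdist f (fun y => (∑ i, Fin.tail w i * y i)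
            + (b + 1 + w 0 + ∑ i, Fin.tail w i)) := by
  unfold hdist
  rw [wtF_split]
  congr 1
  · apply congrArg
    funext y
    simp only [h0, Fin.sum_univ_succ, Fin.cons_zero, Fin.cons_succ, mul_zero, zero_add]
    rfl
  · have key : (fun y => g (Fin.cons (1:ZMod 2) y) + ((∑ i : Fin (m+1), w i * (Fin.cons (1:ZMod 2) y : Fin (m+1) → ZMod 2) i) + b))
        = fun y => (fun z => f z + ((∑ i, Fin.tail w i * z i)
            + (b + 1 + w 0 + ∑ i, Fin.tail w i))) (fun i => 1 + y i) := by
      funext y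
      rw [h1, Fin.sum_univ_succ]
      simp only [Fin.cons_zero, Fin.cons_succ, mul_one]
      have hsum : ∑ i : Fin m, Fin.tail w i * ((1 : ZMod 2) + y i)
          = (∑ i : Fin m, Fin.tail w i) + ∑ i : Fin m, Fin.tail w i * y i := by
        rw [← Finset.sum_add_distrib]
        apply Finset.sum_congr rfl
        intro i _
        ring
      show (1 : ZMod 2) + f (fun i => 1 + y i) + (w 0 + (∑ i : Fin m, w i.succ * y i) + b)
          = f (fun i => 1 + y i) + ((∑ i, Fin.tail w i * (1 + y i))
              + (b + 1 + w 0 + ∑ i, Fin.tail w i))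
      rw [hsum]
      have hfin : ∀ u a s1 s b : ZMod 2,
          1 + u + (a + s1 + b) = u + (s + s1 + (b + 1 + a + s)) := by decide
      exact hfin _ _ _ _ _
    rw [key]
    exact wtF_compl_arg (fun z => f z + ((∑ i, Fin.tail w i * z i)
        + (b + 1 + w 0 + ∑ i, Fin.tail w i)))

lemma setNonempty {N : ℕ} (f : (Fin N → ZMod 2) → ZMod 2) :
    {d : ℕ | ∃ a, IsAffine a ∧ d = hdist f a}.Nonempty := by
  exact ⟨hdist f (fun y => (∑ i, (0:ZMod 2) * y i) + 0),
    ⟨_, ⟨0, 0, fun x => rfl⟩, rfl⟩⟩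

lemma nlin_le {N : ℕ} (f a : (Fin N → ZMod 2) → ZMod 2) (h : IsAffine a) :
    nlin f ≤ hdist f a :=
  Nat.sInf_le ⟨a, h, rfl⟩

lemma two_nlin_le {N : ℕ} (f : (Fin N → ZMod 2) → ZMod 2) :
    2 * nlin f ≤ 2 ^ N := by
  have h0 : nlin f ≤ hdist f (fun y => (∑ i, (0:ZMod 2) * y i) + 0) :=
    nlin_le f _ ⟨0, 0, fun x => rfl⟩
  have h1 : nlin f ≤ hdist f (fun y => (∑ i, (0:ZMod 2) * y i) + 1) :=
    nlin_le f _ ⟨0, 1, fun x => rfl⟩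
  have hs : hdist f (fun y => (∑ i, (0:ZMod 2) * y i) + 0)
      + hdist f (fun y => (∑ i, (0:ZMod 2) * y i) + 1) = 2 ^ N := by
    have := wtF_compl_add (fun x => f x + ((∑ i, (0:ZMod 2) * x i) + 0))
    unfold hdist
    rw [← this]
    congr 1
    apply congrArg
    funext x
    ring
  linarith

/-- `N(A C(A)*) = 2 N(A)`: if `g(0,y) = f(y)` and `g(1,y) = 1 + f(ȳ)`,
then `N(g) = 2·N(f)`. -/
theorem nonlinearity_doubles (m : ℕ) (f : (Fin m → ZMod 2) → ZMod 2)
    (g : (Fin (m + 1) → ZMod 2) → ZMod 2)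
    (h0 : ∀ y, g (Fin.cons (0 : ZMod 2) y) = f y)
    (h1 : ∀ y, g (Fin.cons (1 : ZMod 2) y) = 1 + f (fun i => 1 + y i)) :
    nlin g = 2 * nlin f := by
  apply le_antisymm
  · -- nlin g ≤ 2 * nlin f
    obtain ⟨d, ⟨a, ⟨w, b, hw⟩, hd⟩, hmin⟩ :
        ∃ d ∈ {d : ℕ | ∃ a, IsAffine a ∧ d = hdist f a}, d = nlin f := by
      have := Nat.sInf_mem (setNonempty f)
      exact ⟨nlin f, this, rfl⟩
    have ha : a = fun y => (∑ i, w i * y i) + b := funext hw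
    set W : Fin (m+1) → ZMod 2 := Fin.cons (1 + ∑ i, w i) w with hW
    have hdec := hdist_decomp f g h0 h1 W b
    have htail : Fin.tail W = w := rfl
    have hW0 : W 0 = 1 + ∑ i, w i := rfl
    rw [htail, hW0] at hdec
    have hb' : ∀ b s : ZMod 2, b + 1 + (1 + s) + s = b := by decide
    have hb : b + 1 + (1 + ∑ i, w i) + ∑ i, w i = b := hb' b _
    rw [hb] at hdec
    have : nlin g ≤ hdist g (fun x => (∑ i, W i * x i) + b) :=
      nlin_le g _ ⟨W, b, fun x => rfl⟩
    rw [hdec] at this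
    rw [← ha] at this
    linarith
  · -- 2 * nlin f ≤ nlin g
    apply le_csInf (setNonempty g)
    rintro d ⟨a, ⟨w, b, hw⟩, hd⟩
    have ha : a = fun x => (∑ i, w i * x i) + b := funext hw
    rw [hd, ha, hdist_decomp f g h0 h1 w b]
    have hc' : ∀ u : ZMod 2, u = 0 ∨ u = 1 := by decide
    have hcase := hc' ((1 : ZMod 2) + w 0 + ∑ i, Fin.tail w i)
    have hba : b + 1 + w 0 + ∑ i, Fin.tail w i
        = b + (1 + w 0 + ∑ i, Fin.tail w i) := by ring
    rcases hcase with hc | hc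
    · have : b + 1 + w 0 + ∑ i, Fin.tail w i = b := by rw [hba, hc, add_zero]
      rw [this]
      have := nlin_le f (fun y => (∑ i, Fin.tail w i * y i) + b)
        ⟨Fin.tail w, b, fun x => rfl⟩
      linarith
    · have hbb : b + 1 + w 0 + ∑ i, Fin.tail w i = b + 1 := by rw [hba, hc]
      rw [hbb]
      have hsum : hdist f (fun y => (∑ i, Fin.tail w i * y i) + b)
          + hdist f (fun y => (∑ i, Fin.tail w i * y i) + (b + 1)) = 2 ^ m := by
        have := wtF_compl_add (fun x => f x + ((∑ i, Fin.tail w i * x i) + b))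
        unfold hdist
        rw [← this]
        congr 1
        apply congrArg
        funext x
        ring
      have := two_nlin_le f
      linarith
end

section
/- For n ≥ 2, the nonlinearity of the majority function in 2n+1 variables is N(M_{2n+1}) = 2^(2n) − C(2n,n), where C(2n,n) is the central binomial coefficient. -/
open Finset

/-!
With `χ(v) = (-1)^v` and the Walsh transform `W_f(w) = ∑ₓ χ(f x + w·x)` one has
`2 d(f, w·x + b) = 2^N - χ(b) W_f(w)`, so `2 N(f) = 2^N - max_w |W_f(w)|`.
For the threshold function `maj N (t+1)` and `w i = 1`, pairing `x` (with `x i = 0`) with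
`x + e_i` flips `χ(w·x)`, so each pair cancels unless the threshold lies between the two
weights, i.e. `wt x = t`; hence `W(w) = 2 ∑_{x i = 0, wt x = t} χ(w·x)`, of absolute value at
most `2 C(N-1, t)`, with equality at `w = e_i`. For the odd majority, `W(0) = 0` because
`M(x + 1) = M x + 1`.
-/

namespace BooleanFunction

def chi (v : ZMod 2) : ℤ := if v = 1 then -1 else 1

@[simp] lemma chi_zero : chi 0 = 1 := by decide

@[simp] lemma chi_one : chi 1 = -1 := by decide

lemma chi_add : ∀ u v : ZMod 2, chi (u + v) = chi u * chi v := by decide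

lemma chi_mul_le_abs (v : ZMod 2) (a : ℤ) : chi v * a ≤ |a| := by
  unfold chi; split <;> simp [le_abs_self, neg_le_abs]

lemma abs_chi (v : ZMod 2) : |chi v| = 1 := by
  unfold chi; split <;> simp

variable {N : ℕ}

lemma sum_chi (f : (Fin N → ZMod 2) → ZMod 2) :
    ∑ x, chi (f x) = 2 ^ N - 2 * (wtF f : ℤ) := by
  have h : ∀ x, chi (f x) = 1 - 2 * if f x = 1 then 1 else 0 := by
    intro x; unfold chi; split <;> simp
  simp only [h, sum_sub_distrib, ← mul_sum, sum_boole, wtF, sum_const, card_univ,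
    Fintype.card_pi, Fintype.card_fin, ZMod.card, prod_const, nsmul_eq_mul, mul_one]
  push_cast; ring

def walsh (f : (Fin N → ZMod 2) → ZMod 2) (w : Fin N → ZMod 2) : ℤ :=
  ∑ x, chi (f x + w ⬝ᵥ x)

lemma two_mul_hdist_affine (f : (Fin N → ZMod 2) → ZMod 2) (w : Fin N → ZMod 2) (b : ZMod 2) :
    2 * (hdist f (fun x => w ⬝ᵥ x + b) : ℤ) = 2 ^ N - chi b * walsh f w := by
  have h := sum_chi (fun x => f x + (w ⬝ᵥ x + b))
  rw [hdist, walsh]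
  simp only [← add_assoc, chi_add _ b, ← sum_mul] at h ⊢
  linarith

lemma two_mul_nlin_eq (f : (Fin N → ZMod 2) → ZMod 2) (W : ℤ) (w₀ : Fin N → ZMod 2)
    (hle : ∀ w, |walsh f w| ≤ W) (heq : walsh f w₀ = W) :
    2 * (nlin f : ℤ) = 2 ^ N - W := by
  have hd₀ := two_mul_hdist_affine f w₀ 0
  rw [chi_zero, one_mul, heq] at hd₀
  have hleast : IsLeast {d | ∃ a, IsAffine a ∧ d = hdist f a} (hdist f (fun x => w₀ ⬝ᵥ x + 0)) := by
    refine ⟨⟨_, ⟨w₀, 0, fun x => rfl⟩, rfl⟩, ?_⟩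
    rintro _ ⟨a, ⟨w, b, ha⟩, rfl⟩
    have hd := two_mul_hdist_affine f w b
    rw [show (fun x => w ⬝ᵥ x + b) = a from funext fun x => (ha x).symm] at hd
    have := chi_mul_le_abs b (walsh f w)
    have := hle w
    zify
    linarith
  rw [nlin, hleast.csInf_eq, hd₀]

lemma wtV_le (x : Fin N → ZMod 2) : wtV x ≤ N :=
  (card_filter_le _ _).trans_eq (card_fin N)

lemma wtV_add_one (x : Fin N → ZMod 2) : wtV (x + 1) = N - wtV x := by
  have h := card_filter_add_card_filter_not (s := univ) (fun j => x j = 1)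
  have hfilt : ∀ j, (x + 1) j = 1 ↔ ¬ x j = 1 := fun j => by
    simp only [Pi.add_apply, Pi.one_apply]; generalize x j = v; revert v; decide
  simp only [wtV, hfilt, card_fin] at h ⊢
  omega

lemma maj_odd_add_one (n : ℕ) (x : Fin (2 * n + 1) → ZMod 2) :
    maj (2 * n + 1) (n + 1) (x + 1) = maj (2 * n + 1) (n + 1) x + 1 := by
  have := wtV_le x
  unfold maj
  rw [wtV_add_one]
  split_ifs <;> first | omega | decide

lemma sum_chi_eq_zero_of_add_eq_add_one (f : (Fin N → ZMod 2) → ZMod 2) (v : Fin N → ZMod 2)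
    (hf : ∀ x, f (x + v) = f x + 1) : ∑ x, chi (f x) = 0 := by
  have h := Equiv.sum_comp (Equiv.addRight v) (fun x => chi (f x))
  simp only [Equiv.coe_addRight, hf, chi_add, ← sum_mul, chi_one] at h
  linarith

lemma walsh_maj_odd_zero (n : ℕ) : walsh (maj (2 * n + 1) (n + 1)) 0 = 0 := by
  simp only [walsh, zero_dotProduct, add_zero]
  exact sum_chi_eq_zero_of_add_eq_add_one _ 1 (maj_odd_add_one n)

lemma add_add_self (x y : Fin N → ZMod 2) : x + y + y = x := by
  ext j
  simp only [Pi.add_apply, add_assoc, CharTwo.add_self_eq_zero, add_zero]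

lemma sum_eq_sum_filter_add_single {M : Type*} [AddCommMonoid M]
    (F : (Fin N → ZMod 2) → M) (i : Fin N) :
    ∑ x, F x = ∑ x with x i = 0, (F x + F (x + Pi.single i 1)) := by
  rw [sum_add_distrib, ← sum_filter_add_sum_filter_not univ (fun x => x i = 0)]
  congr 1
  have hflip : ∀ v : ZMod 2, v + 1 = 0 ↔ ¬ v = 0 := by decide
  refine sum_nbij' (· + Pi.single i 1) (· + Pi.single i 1) ?_ ?_ ?_ ?_ ?_
  · intro x hx; simpa [hflip] using hx
  · intro x hx; simpa [hflip] using hx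
  · intro x _; exact add_add_self x _
  · intro x _; exact add_add_self x _
  · intro x _; rw [add_add_self]

lemma wtV_add_single_of_eq_zero (x : Fin N → ZMod 2) (i : Fin N) (hx : x i = 0) :
    wtV (x + Pi.single i 1) = wtV x + 1 := by
  have hfilt : univ.filter (fun j => x j + (Pi.single i 1 : Fin N → ZMod 2) j = 1)
      = insert i (univ.filter fun j => x j = 1) := by
    ext j
    rcases eq_or_ne j i with rfl | hj
    · simp [hx]
    · simp [hj]
  simp only [wtV, Pi.add_apply, hfilt]
  rw [card_insert_of_notMem (by simp [hx])]

lemma chi_maj_add_chi_maj_add_single (t : ℕ) (w x : Fin N → ZMod 2) (i : Fin N)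
    (hw : w i = 1) (hx : x i = 0) :
    chi (maj N (t + 1) x + w ⬝ᵥ x)
        + chi (maj N (t + 1) (x + Pi.single i 1) + w ⬝ᵥ (x + Pi.single i 1))
      = if wtV x = t then 2 * chi (w ⬝ᵥ x) else 0 := by
  rw [dotProduct_add, dotProduct_single, hw, mul_one]
  simp only [maj, wtV_add_single_of_eq_zero x i hx, chi_add]
  split_ifs <;> first | omega | simp <;> ring

lemma walsh_maj_eq (t : ℕ) (w : Fin N → ZMod 2) (i : Fin N) (hw : w i = 1) :
    walsh (maj N (t + 1)) w = 2 * ∑ x with x i = 0 ∧ wtV x = t, chi (w ⬝ᵥ x) := by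
  rw [walsh, sum_eq_sum_filter_add_single _ i,
    sum_congr rfl fun x hx => chi_maj_add_chi_maj_add_single t w x i hw (mem_filter.1 hx).2,
    ← sum_filter, filter_filter, mul_sum]

lemma card_filter_apply_eq_zero_and_wtV_eq (i : Fin (N + 1)) (k : ℕ) :
    #{x : Fin (N + 1) → ZMod 2 | x i = 0 ∧ wtV x = k} = N.choose k := by
  have hsupp : ∀ s : Finset (Fin (N + 1)),
      univ.filter (fun j => (if j ∈ s then 1 else 0 : ZMod 2) = 1) = s := fun s => by
    ext j; by_cases hj : j ∈ s <;> simp [hj]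
  have hind : ∀ x : Fin (N + 1) → ZMod 2,
      (fun j => if j ∈ univ.filter (fun j => x j = 1) then 1 else 0) = x := fun x => by
    ext j
    simp only [mem_filter, mem_univ, true_and]
    generalize x j = v; revert v; decide
  have hcard : #((univ.erase i).powersetCard k) = N.choose k := by simp
  rw [← hcard]
  refine card_bij' (fun x _ => univ.filter fun j => x j = 1)
    (fun s _ j => if j ∈ s then 1 else 0) ?_ ?_ (fun x _ => hind x) (fun s _ => hsupp s)
  · intro x hx
    rw [mem_filter] at hx
    refine mem_powersetCard.2 ⟨fun j hj => mem_erase.2 ⟨?_, mem_univ j⟩, hx.2.2⟩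
    rintro rfl
    simp [hx.2.1] at hj
  · intro s hs
    rw [mem_powersetCard] at hs
    refine mem_filter.2 ⟨mem_univ _, ?_, by rw [wtV, hsupp, hs.2]⟩
    simpa using fun h => (mem_erase.1 (hs.1 h)).1 rfl

lemma abs_walsh_maj_le (t : ℕ) (w : Fin (N + 1) → ZMod 2) (hw : w ≠ 0) :
    |walsh (maj (N + 1) (t + 1)) w| ≤ 2 * N.choose t := by
  obtain ⟨i, hi⟩ := Function.ne_iff.1 hw
  rw [walsh_maj_eq t w i (Fin.eq_one_of_ne_zero _ hi), abs_mul, abs_two,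
    ← card_filter_apply_eq_zero_and_wtV_eq i t]
  gcongr
  refine (abs_sum_le_sum_abs _ _).trans_eq ?_
  simp [abs_chi]

lemma walsh_maj_single (t : ℕ) (i : Fin (N + 1)) :
    walsh (maj (N + 1) (t + 1)) (Pi.single i 1) = 2 * N.choose t := by
  rw [walsh_maj_eq t _ i (Pi.single_eq_same i 1), ← card_filter_apply_eq_zero_and_wtV_eq i t,
    sum_congr rfl fun x hx => by rw [single_dotProduct, one_mul, (mem_filter.1 hx).2.1, chi_zero]]
  simp

lemma abs_walsh_maj_odd_le (n : ℕ) (w : Fin (2 * n + 1) → ZMod 2) :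
    |walsh (maj (2 * n + 1) (n + 1)) w| ≤ 2 * (2 * n).choose n := by
  rcases eq_or_ne w 0 with rfl | hw
  · rw [walsh_maj_odd_zero, abs_zero]; positivity
  · exact abs_walsh_maj_le n w hw

end BooleanFunction

open BooleanFunction

theorem nonlinearity_majority_odd_general (n : ℕ) :
    nlin (maj (2 * n + 1) (n + 1)) = 2 ^ (2 * n) - Nat.choose (2 * n) n := by
  have h := two_mul_nlin_eq _ _ (Pi.single 0 1) (abs_walsh_maj_odd_le n) (walsh_maj_single n 0)
  have hC := Nat.choose_le_two_pow (2 * n) n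
  zify [hC]
  rw [pow_succ] at h
  linarith

/-- `N(M_{2n+1}) = 2^(2n) - C(2n,n)`. -/
theorem nonlinearity_majority_odd (n : ℕ) (hn : 2 ≤ n) :
    nlin (maj (2 * n + 1) (n + 1)) = 2 ^ (2 * n) - Nat.choose (2 * n) n :=
  nonlinearity_majority_odd_general n
end

section
/- For n ≥ 2, the nonlinearity of the majority function in 2n variables satisfies 2·N(M_{2n}) = 2^(2n) − C(2n,n), i.e., N(M_{2n}) = 2^(2n−1) − C(2n,n)/2, where C(2n,n) is the central binomial coefficient. -/
open Finset

/-! The constant function `1` is a best affine approximation of `M_{2n}`. Its distance to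
`M_{2n}` is the number of words of weight `< n`, which is `(2^(2n) - C(2n,n))/2` because
complementation exchanges weights `< n` and `> n`; the constant `0` is at least as far.
A nonconstant affine `a` with `wᵢ = 1` changes value along every edge `{x, x + eᵢ}`, so it
disagrees with `M_{2n}` at least once on every such edge along which `M_{2n}` is constant.
The edges along which `M_{2n}` changes join weights `n - 1` and `n`, and there are at most
`C(2n,n)` words `x` on them. -/

lemma zmod_two_eq_zero_or_one (a : ZMod 2) : a = 0 ∨ a = 1 := by revert a; decide

section Weight

variable {N : ℕ}

lemma card_univ_eq : #(univ : Finset (Fin N → ZMod 2)) = 2 ^ N := by simp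

lemma wtV_le (x : Fin N → ZMod 2) : wtV x ≤ N :=
  (card_filter_le _ _).trans_eq (card_fin N)

lemma wtV_add_one (x : Fin N → ZMod 2) : wtV (x + 1) = N - wtV x := by
  have hsplit := card_filter_add_card_filter_not (s := univ) (fun i => x i = 1)
  have hflip : ∀ i, (x + 1) i = 1 ↔ ¬ x i = 1 := fun i => by
    rcases zmod_two_eq_zero_or_one (x i) with h | h <;> simp [h]
  simp only [card_univ, Fintype.card_fin] at hsplit
  simp only [wtV, hflip]
  omega

lemma wtV_add_single_of_eq_zero {x : Fin N → ZMod 2} {i : Fin N} (hx : x i = 0) :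
    wtV (x + Pi.single i 1) = wtV x + 1 := by
  have hsupp : univ.filter (fun j => (x + Pi.single i 1 : Fin N → ZMod 2) j = 1) =
      insert i (univ.filter fun j => x j = 1) := by
    ext j
    by_cases hj : j = i
    · subst hj; simp [hx]
    · simp [hj]
  rw [wtV, hsupp, card_insert_of_notMem (by simp [hx]), wtV]

lemma card_wtV_eq (k : ℕ) : #{x : Fin N → ZMod 2 | wtV x = k} = N.choose k := by
  rw [← card_fin N, ← card_powersetCard k (univ : Finset (Fin N)), card_fin]
  refine card_nbij' (fun x => univ.filter fun i => x i = 1) (fun s i => if i ∈ s then 1 else 0)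
    ?_ ?_ ?_ ?_
  · exact fun x hx => mem_powersetCard.mpr ⟨subset_univ _, (mem_filter.mp hx).2⟩
  · exact fun s hs =>
      mem_filter.mpr ⟨mem_univ _, by simpa [wtV] using (mem_powersetCard.mp hs).2⟩
  · intro x _
    funext i
    rcases zmod_two_eq_zero_or_one (x i) with h | h <;> simp [h]
  · intro s _
    ext i
    by_cases h : i ∈ s <;> simp [h]

end Weight

lemma card_wtV_lt_eq_card_lt_wtV (n : ℕ) :
    #{x : Fin (2 * n) → ZMod 2 | wtV x < n} = #{x : Fin (2 * n) → ZMod 2 | n < wtV x} :=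
  card_equiv (Equiv.addRight 1) fun x => by
    simp only [mem_filter, mem_univ, true_and, Equiv.coe_addRight, wtV_add_one]
    have := wtV_le x
    omega

lemma two_mul_card_wtV_lt_add_choose (n : ℕ) :
    2 * #{x : Fin (2 * n) → ZMod 2 | wtV x < n} + (2 * n).choose n = 2 ^ (2 * n) := by
  have hle : #{x : Fin (2 * n) → ZMod 2 | wtV x ≤ n} =
      #{x : Fin (2 * n) → ZMod 2 | wtV x < n} + #{x : Fin (2 * n) → ZMod 2 | wtV x = n} := by
    rw [← card_union_of_disjoint (disjoint_filter.mpr fun _ _ h => h.ne)]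
    congr 1 with x
    simp only [mem_filter, mem_univ, true_and, mem_union]
    omega
  have htotal := card_filter_add_card_filter_not (s := univ)
    (fun x : Fin (2 * n) → ZMod 2 => wtV x ≤ n)
  simp only [not_le, card_univ_eq] at htotal
  rw [hle, card_wtV_eq, ← card_wtV_lt_eq_card_lt_wtV] at htotal
  omega

section Distance

variable {N : ℕ}

lemma card_add_eq_le_two_mul_hdist (f a : (Fin N → ZMod 2) → ZMod 2) (e : Fin N → ZMod 2)
    (ha : ∀ x, a (x + e) = a x + 1) : #{x | f (x + e) = f x} ≤ 2 * hdist f a := by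
  have hshift : #{x | f (x + e) + a (x + e) = 1} = hdist f a :=
    card_equiv (Equiv.addRight e) fun x => by simp
  calc #{x | f (x + e) = f x}
      ≤ #((univ.filter fun x => f x + a x = 1) ∪
          univ.filter fun x => f (x + e) + a (x + e) = 1) := by
        refine card_le_card fun x hx => ?_
        simp only [mem_filter, mem_univ, true_and, mem_union, ha] at hx ⊢
        -- `a` changes between `x` and `x + e` while `f` does not, so one of them is a disagreement
        revert hx
        generalize f x = u, f (x + e) = v, a x = c
        revert u v c
        decide
    _ ≤ hdist f a + hdist f a := (card_union_le _ _).trans_eq (by rw [hshift]; rfl)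
    _ = 2 * hdist f a := (two_mul _).symm

lemma apply_add_single_eq_add_one {a : (Fin N → ZMod 2) → ZMod 2} {w : Fin N → ZMod 2}
    {b : ZMod 2} (ha : ∀ x, a x = ∑ j, w j * x j + b) {i : Fin N} (hi : w i = 1)
    (x : Fin N → ZMod 2) : a (x + Pi.single i 1) = a x + 1 := by
  simp [ha, mul_add, sum_add_distrib, Pi.single_apply, hi]
  ring

lemma hdist_zero_add_hdist_one (f : (Fin N → ZMod 2) → ZMod 2) :
    hdist f (fun _ => 0) + hdist f (fun _ => 1) = 2 ^ N := by
  rw [← card_univ_eq, ← card_filter_add_card_filter_not (p := fun x => f x = 1)]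
  unfold hdist wtF
  congr 2 with x
  · simp
  · rcases zmod_two_eq_zero_or_one (f x) with h | h <;> simp [h]

lemma hdist_maj_one (t : ℕ) :
    hdist (maj N t) (fun _ => 1) = #{x : Fin N → ZMod 2 | wtV x < t} := by
  unfold hdist wtF maj
  congr 1 with x
  simp

end Distance

section Majority

lemma maj_ne_maj_iff_of_wtV_eq_succ {N t : ℕ} {x y : Fin N → ZMod 2}
    (h : wtV y = wtV x + 1) : maj N t y ≠ maj N t x ↔ wtV y = t := by
  unfold maj
  split_ifs <;> simp <;> omega

lemma card_maj_add_single_ne_le_choose (n : ℕ) (i : Fin (2 * n)) :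
    #{x : Fin (2 * n) → ZMod 2 | maj (2 * n) n (x + Pi.single i 1) ≠ maj (2 * n) n x} ≤
      (2 * n).choose n := by
  -- `x` goes to the member of weight `n` of its edge if `x i = 1`, and otherwise to the
  -- complement of that member; the `i`-th coordinate is kept, which makes the map injective.
  rw [← card_wtV_eq]
  refine card_le_card_of_injOn (fun x => if x i = 1 then x else x + Pi.single i 1 + 1)
    (fun x hx => ?_) ?_
  · simp only [coe_filter, mem_univ, true_and, Set.mem_ofPred_eq] at hx ⊢
    rcases zmod_two_eq_zero_or_one (x i) with h | h
    · have hw := wtV_add_single_of_eq_zero h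
      rw [maj_ne_maj_iff_of_wtV_eq_succ hw] at hx
      rw [if_neg (by simp [h]), wtV_add_one]
      omega
    · have hw := wtV_add_single_of_eq_zero
        (show (x + Pi.single i 1 : Fin (2 * n) → ZMod 2) i = 0 by simp [h]; decide)
      rw [add_assoc, ZModModule.add_self, add_zero] at hw
      simpa [h] using (maj_ne_maj_iff_of_wtV_eq_succ hw).mp hx.symm
  · have hcoord : ∀ x : Fin (2 * n) → ZMod 2,
        (if x i = 1 then x else x + Pi.single i 1 + 1) i = x i := fun x => by
      split_ifs
      · rfl
      · simp [add_assoc, ZModModule.add_self]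
    intro x _ y _ hxy
    simp only at hxy
    have hi : x i = y i := by rw [← hcoord x, hxy, hcoord]
    by_cases h : x i = 1
    · simpa [h, ← hi] using hxy
    · simpa [h, ← hi] using hxy

lemma hdist_maj_one_le (n : ℕ) {a : (Fin (2 * n) → ZMod 2) → ZMod 2} (ha : IsAffine a) :
    hdist (maj (2 * n) n) (fun _ => 1) ≤ hdist (maj (2 * n) n) a := by
  obtain ⟨w, b, hab⟩ := ha
  have hcount := two_mul_card_wtV_lt_add_choose n
  rw [hdist_maj_one]
  by_cases hw : ∃ i, w i = 1
  · obtain ⟨i, hi⟩ := hw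
    have hpair := card_add_eq_le_two_mul_hdist (maj (2 * n) n) a _
      (apply_add_single_eq_add_one hab hi)
    have hchange := card_maj_add_single_ne_le_choose n i
    have htotal := card_filter_add_card_filter_not (s := univ)
      (fun x => maj (2 * n) n (x + Pi.single i 1) = maj (2 * n) n x)
    simp only [card_univ_eq, ← ne_eq] at htotal
    omega
  · push Not at hw
    have hconst : a = fun _ => b := funext fun x => by
      simp [hab, fun j => (zmod_two_eq_zero_or_one (w j)).resolve_right (hw j)]
    subst hconst
    rcases zmod_two_eq_zero_or_one b with rfl | rfl
    · have hcompl := hdist_zero_add_hdist_one (maj (2 * n) n)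
      rw [hdist_maj_one] at hcompl
      omega
    · rw [hdist_maj_one]

end Majority

lemma nlin_eq_hdist {N : ℕ} {f a₀ : (Fin N → ZMod 2) → ZMod 2} (ha₀ : IsAffine a₀)
    (hmin : ∀ a, IsAffine a → hdist f a₀ ≤ hdist f a) : nlin f = hdist f a₀ :=
  IsLeast.csInf_eq ⟨⟨a₀, ha₀, rfl⟩, by rintro _ ⟨a, ha, rfl⟩; exact hmin a ha⟩

theorem nonlinearity_majority_even_general (n : ℕ) :
    2 * nlin (maj (2 * n) n) = 2 ^ (2 * n) - Nat.choose (2 * n) n := by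
  have hone : IsAffine (fun _ : Fin (2 * n) → ZMod 2 => (1 : ZMod 2)) := ⟨0, 1, by simp⟩
  rw [nlin_eq_hdist hone fun _ => hdist_maj_one_le n, hdist_maj_one]
  have := two_mul_card_wtV_lt_add_choose n
  omega

/-- `N(M_{2n}) = 2^(2n-1) - C(2n,n)/2`, stated as `2·N(M_{2n}) = 2^(2n) - C(2n,n)`. -/
theorem nonlinearity_majority_even (n : ℕ) (hn : 2 ≤ n) :
    2 * nlin (maj (2 * n) n) = 2 ^ (2 * n) - Nat.choose (2 * n) n :=
  nonlinearity_majority_even_general n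
end

section
/- For n ≥ 2, the nonlinearity of the majority function in 2n variables is exactly half that of the majority function in 2n+1 variables: 2·N(M_{2n}) = N(M_{2n+1}). -/
open Finset

namespace MajHelper

abbrev V (N : ℕ) := Fin N → ZMod 2

def aff {N : ℕ} (w : V N) (b : ZMod 2) : V N → ZMod 2 := fun x => (∑ i, w i * x i) + b

lemma isAffine_aff {N : ℕ} (w : V N) (b : ZMod 2) : IsAffine (aff w b) :=
  ⟨w, b, fun _ => rfl⟩

lemma nlin_eq {N : ℕ} (f : V N → ZMod 2) :
    nlin f = sInf {d | ∃ w b, d = hdist f (aff w b)} := by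
  unfold nlin
  congr 1
  ext d
  constructor
  · rintro ⟨a, ⟨w, b, hw⟩, rfl⟩
    exact ⟨w, b, by rw [show a = aff w b from funext hw]⟩
  · rintro ⟨w, b, rfl⟩
    exact ⟨aff w b, isAffine_aff w b, rfl⟩

lemma wtF_eq_sum {N : ℕ} (f : V N → ZMod 2) :
    wtF f = ∑ x : V N, if f x = 1 then 1 else 0 := by
  unfold wtF
  rw [Finset.card_filter]

lemma sum_zmod2 {M : Type*} [AddCommMonoid M] (h : ZMod 2 → M) :
    ∑ z : ZMod 2, h z = h 0 + h 1 := by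
  have huniv : (univ : Finset (ZMod 2)) = {0, 1} := by decide
  rw [huniv, Finset.sum_insert (by decide), Finset.sum_singleton]

def snocEquiv (N : ℕ) : V N × ZMod 2 ≃ V (N + 1) where
  toFun p := Fin.snoc p.1 p.2
  invFun x := (Fin.init x, x (Fin.last N))
  left_inv p := by simp
  right_inv x := by simp

lemma wtF_snoc {N : ℕ} (g : V (N + 1) → ZMod 2) :
    wtF g = wtF (fun y => g (Fin.snoc y 0)) + wtF (fun y => g (Fin.snoc y 1)) := by
  rw [wtF_eq_sum, wtF_eq_sum, wtF_eq_sum]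
  rw [← Equiv.sum_comp (snocEquiv N) (fun x => if g x = 1 then 1 else 0)]
  rw [Fintype.sum_prod_type]
  rw [← Finset.sum_add_distrib]
  exact Finset.sum_congr rfl fun y _ => sum_zmod2 _

lemma wtV_snoc {N : ℕ} (y : V N) (z : ZMod 2) :
    wtV (Fin.snoc y z) = wtV y + if z = 1 then 1 else 0 := by
  unfold wtV
  rw [Finset.card_filter, Finset.card_filter, Fin.sum_univ_castSucc]
  simp

lemma maj_snoc_zero (N t : ℕ) (x : V N) :
    maj (N + 1) t (Fin.snoc x 0) = maj N t x := by
  unfold maj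
  rw [wtV_snoc]
  simp

lemma maj_snoc_one (N t : ℕ) (x : V N) :
    maj (N + 1) (t + 1) (Fin.snoc x 1) = maj N t x := by
  unfold maj
  rw [wtV_snoc, if_pos rfl]
  exact if_congr (by omega) rfl rfl

def neg {N : ℕ} (x : V N) : V N := fun i => x i + 1

lemma neg_neg' {N : ℕ} : Function.Involutive (neg (N := N)) := by
  intro x
  funext i
  show x i + 1 + 1 = x i
  have h : ∀ a : ZMod 2, a + 1 + 1 = a := by decide
  exact h _

lemma wtV_le {N : ℕ} (x : V N) : wtV x ≤ N := by
  refine le_trans (Finset.card_filter_le _ _) ?_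
  simp

lemma wtV_neg {N : ℕ} (x : V N) : wtV (neg x) = N - wtV x := by
  unfold wtV neg
  have h : ∀ a : ZMod 2, (a + 1 = 1) ↔ ¬(a = 1) := by decide
  simp only [h]
  rw [Finset.filter_not, Finset.card_sdiff_of_subset (Finset.filter_subset _ _)]
  simp

lemma maj_neg (n : ℕ) (x : V (2 * n)) :
    maj (2 * n) n (neg x) = 1 + maj (2 * n) (n + 1) x := by
  unfold maj
  rw [wtV_neg]
  have h := wtV_le x
  by_cases hc : n + 1 ≤ wtV x
  · rw [if_neg (by omega), if_pos hc]; decide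
  · rw [if_pos (by omega), if_neg hc]; decide

lemma aff_snoc {N : ℕ} (w : V (N + 1)) (b : ZMod 2) (y : V N) (z : ZMod 2) :
    aff w b (Fin.snoc y z) = aff (Fin.init w) (w (Fin.last N) * z + b) y := by
  unfold aff
  rw [Fin.sum_univ_castSucc]
  simp only [Fin.snoc_castSucc, Fin.snoc_last]
  show (∑ i : Fin N, w i.castSucc * y i) + w (Fin.last N) * z + b
      = (∑ i : Fin N, w i.castSucc * y i) + (w (Fin.last N) * z + b)
  ring

lemma hdist_complement (n : ℕ) (w : V (2 * n)) (b : ZMod 2) :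
    hdist (maj (2 * n) (n + 1)) (aff w b) =
      hdist (maj (2 * n) n) (aff w ((∑ i, w i) + b + 1)) := by
  unfold hdist
  rw [wtF_eq_sum, wtF_eq_sum]
  refine Fintype.sum_equiv (neg_neg' (N := 2 * n)).toPerm _ _ fun x => ?_
  have h1 : maj (2 * n) n (neg x) = 1 + maj (2 * n) (n + 1) x := maj_neg n x
  have h2 : aff w ((∑ i, w i) + b + 1) (neg x)
      = ((∑ i, w i * x i) + (∑ i, w i)) + ((∑ i, w i) + b + 1) := by
    unfold aff neg
    congr 1
    rw [← Finset.sum_add_distrib]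
    exact Finset.sum_congr rfl fun i _ => by ring
  show (if maj (2 * n) (n + 1) x + aff w b x = 1 then 1 else 0)
      = (if maj (2 * n) n (neg x) + aff w ((∑ i, w i) + b + 1) (neg x) = 1 then 1 else 0)
  rw [h1, h2]
  have key : ∀ a c S bb : ZMod 2,
      (a + (c + bb) = 1) ↔ ((1 + a) + ((c + S) + (S + bb + 1)) = 1) := by decide
  exact if_congr (key (maj (2 * n) (n + 1) x) (∑ i, w i * x i) (∑ i, w i) b) rfl rfl

lemma hdist_snoc (n : ℕ) (w : V (2 * n + 1)) (b : ZMod 2) :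
    hdist (maj (2 * n + 1) (n + 1)) (aff w b) =
      hdist (maj (2 * n) (n + 1)) (aff (Fin.init w) b)
      + hdist (maj (2 * n) n) (aff (Fin.init w) (w (Fin.last (2 * n)) + b)) := by
  unfold hdist
  rw [wtF_snoc]
  simp only [maj_snoc_zero, maj_snoc_one, aff_snoc, mul_zero, zero_add, mul_one]

end MajHelper

open MajHelper

/-- `2·N(M_{2n}) = N(M_{2n+1})`. -/
theorem nonlinearity_even_half_of_odd (n : ℕ) (hn : 2 ≤ n) :
    2 * nlin (maj (2 * n) n) = nlin (maj (2 * n + 1) (n + 1)) := by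
  classical
  rw [nlin_eq, nlin_eq]
  set g : V (2 * n) → ZMod 2 := maj (2 * n) n with hg
  have hTne : {d | ∃ w b, d = hdist g (aff w b)}.Nonempty := ⟨_, 0, 0, rfl⟩
  obtain ⟨w₀, b₀, hw₀⟩ := Nat.sInf_mem hTne
  set m := sInf {d | ∃ w b, d = hdist g (aff w b)} with hm
  have hset : {d | ∃ w b, d = hdist (maj (2 * n + 1) (n + 1)) (aff w b)} =
      {d | ∃ (w : V (2 * n)) (c0 c1 : ZMod 2),
        d = hdist g (aff w c0) + hdist g (aff w c1)} := by
    ext d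
    constructor
    · rintro ⟨w, b, rfl⟩
      exact ⟨Fin.init w, (∑ i, Fin.init w i) + b + 1, w (Fin.last _) + b,
        by rw [hdist_snoc, hdist_complement]⟩
    · rintro ⟨w, c0, c1, rfl⟩
      have key1 : ∀ S c : ZMod 2, S + (S + c + 1) + 1 = c := by decide
      have key2 : ∀ b c : ZMod 2, (c + b) + b = c := by decide
      refine ⟨Fin.snoc w (c1 + ((∑ i, w i) + c0 + 1)), (∑ i, w i) + c0 + 1, ?_⟩
      rw [hdist_snoc, hdist_complement, Fin.init_snoc, Fin.snoc_last,
        key1 (∑ i, w i) c0, key2 ((∑ i, w i) + c0 + 1) c1]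
  rw [hset]
  apply le_antisymm
  · refine le_csInf ⟨_, w₀, b₀, b₀, rfl⟩ ?_
    rintro d ⟨w, c0, c1, rfl⟩
    have h0 : m ≤ hdist g (aff w c0) := Nat.sInf_le ⟨w, c0, rfl⟩
    have h1 : m ≤ hdist g (aff w c1) := Nat.sInf_le ⟨w, c1, rfl⟩
    omega
  · have h2 : 2 * m = hdist g (aff w₀ b₀) + hdist g (aff w₀ b₀) := by omega
    exact h2 ▸ Nat.sInf_le ⟨w₀, b₀, b₀, rfl⟩
end
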